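/- arXiv:1612.06609 — 4 statements merged into one kernel-verified Lean document; each statement's English description precedes it below -/
import Mathlib

section
/- Let p be a prime, n a positive integer, and k a primitive divisor of p^n − 1 such that k is even if p is odd. Suppose k = b·c with b > 1, b dividing n, and c a primitive divisor of p^{n/b} − 1. Then c is even if p is odd (so GPaley(p^{n/b}, c) is defined), the graph GPaley(p^{n/b}, c) is connected, and GPaley(p^n, k) is isomorphic to the b-fold Cartesian power □^b GPaley(p^{n/b}, c). -/
/-- `k` is a primitive divisor of `p ^ n - 1`:  `k` divides `p ^ n - 1`
but `k` does not divide `p ^ a - 1` for any `1 ≤ a < n`. -/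
def IsPrimitiveDivisor (p n k : ℕ) : Prop :=
  k ∣ p ^ n - 1 ∧ ∀ a : ℕ, 1 ≤ a → a < n → ¬ k ∣ p ^ a - 1

/-- The generalised Paley graph `GPaley(p^n, k)`: vertices are the elements of
`GF(p^n)`, and distinct `x, y` are adjacent iff `x - y` is a `d`-th power in
`GF(p^n)^*`, where `d = (p^n - 1)/k`.  (Under the standing hypothesis that `k`
is even when `p` is odd, the underlying relation is symmetric, so taking the
symmetrised relation via `fromRel` yields exactly this graph.) -/
def gpaley (p : ℕ) [Fact p.Prime] (n k : ℕ) : SimpleGraph (GaloisField p n) :=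
  SimpleGraph.fromRel fun x y =>
    ∃ z : GaloisField p n, z ≠ 0 ∧ z ^ ((p ^ n - 1) / k) = x - y

/-- The `b`-fold Cartesian (box) power of a simple graph: vertices are
`b`-tuples, two tuples being adjacent iff they agree in all but one
coordinate and are adjacent in that coordinate. -/
def boxPow {V : Type*} (b : ℕ) (G : SimpleGraph V) : SimpleGraph (Fin b → V) where
  Adj x y := ∃ i, G.Adj (x i) (y i) ∧ ∀ j, j ≠ i → x j = y j
  symm := by
    constructor
    rintro x y ⟨i, hadj, h⟩
    exact ⟨i, hadj.symm, fun j hj => (h j hj).symm⟩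
  loopless := by
    constructor
    rintro x ⟨i, hadj, -⟩
    exact G.loopless.irrefl _ hadj

/-!
Let `F = GF(p^(n/b)) ⊆ L = GF(p^n)` and let `s ∈ L` be a primitive `k`-th root of unity. As `k` is
a primitive divisor of `p^n - 1`, `s` lies in no proper subfield of `L`, so `1, s, …, s^(b-1)` is
an `F`-basis of `L`; and `s^b ∈ F` because its order divides `c ∣ |F| - 1`. Hence the `k`-th roots
of unity of `L`, the connection set of `GPaley(p^n, k)`, are exactly the `a s^i` with `a^c = 1` and
`i < b`: in coordinates, the vectors with one nonzero entry, that entry lying in the connection set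
of `GPaley(p^(n/b), c)`. The same primitivity argument, applied to `c` and `F`, shows that the
`c`-th roots of unity generate `F` as a ring, hence additively, which is connectedness. Finally, if
`p` and `c` were odd, `b` would be even and `s^(b/2)` would have order dividing `2c ∣ |F| - 1`, so
it would lie in `F`, contradicting the basis.
-/

open Module

namespace FiniteField

variable {K : Type*} [Field K] [Finite K]

theorem card_sub_one_ne_zero : Nat.card K - 1 ≠ 0 := by
  have := Finite.one_lt_card (α := K)
  omega

theorem exists_isPrimitiveRoot_of_dvd {k : ℕ} (hk : k ∣ Nat.card K - 1) :
    ∃ ζ : K, IsPrimitiveRoot ζ k := by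
  obtain ⟨g, hg⟩ := IsCyclic.exists_ofOrder_eq_natCard (α := Kˣ)
  have hg' : IsPrimitiveRoot (g : K) (Nat.card K - 1) := by
    rw [IsPrimitiveRoot.iff_orderOf, orderOf_units, hg, Nat.card_units]
  exact ⟨_, hg'.pow (Nat.pos_of_ne_zero card_sub_one_ne_zero) (Nat.div_mul_cancel hk).symm⟩

theorem mem_range_algebraMap_of_pow_eq_one {L : Type*} [Field L] [Algebra K L] {d : ℕ}
    (hd : d ∣ Nat.card K - 1) {x : L} (hx : x ^ d = 1) : x ∈ Set.range (algebraMap K L) := by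
  obtain ⟨ζ, hζ⟩ := exists_isPrimitiveRoot_of_dvd hd
  have : NeZero d := ⟨ne_zero_of_dvd_ne_zero card_sub_one_ne_zero hd⟩
  obtain ⟨i, -, hi⟩ := (hζ.map_of_injective (algebraMap K L).injective).eq_pow_of_pow_eq_one hx
  exact ⟨ζ ^ i, by rw [map_pow, hi]⟩

theorem exists_pow_card_sub_one_div_eq_iff {k : ℕ} (hk : k ∣ Nat.card K - 1) (u : K) :
    (∃ z : K, z ≠ 0 ∧ z ^ ((Nat.card K - 1) / k) = u) ↔ u ^ k = 1 := by
  have := Fintype.ofFinite K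
  constructor
  · rintro ⟨z, hz, rfl⟩
    rw [← pow_mul, Nat.div_mul_cancel hk, Nat.card_eq_fintype_card]
    exact pow_card_sub_one_eq_one z hz
  · intro hu
    obtain ⟨g, hg⟩ := exists_isPrimitiveRoot_of_dvd (K := K) dvd_rfl
    have : NeZero k := ⟨ne_zero_of_dvd_ne_zero card_sub_one_ne_zero hk⟩
    obtain ⟨i, -, rfl⟩ := (hg.pow (Nat.pos_of_ne_zero card_sub_one_ne_zero)
      (Nat.div_mul_cancel hk).symm).eq_pow_of_pow_eq_one hu
    exact ⟨g ^ i, pow_ne_zero _ (hg.ne_zero card_sub_one_ne_zero),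
      by rw [← pow_mul, ← pow_mul, mul_comm]⟩

end FiniteField

theorem Subring.eq_top_of_isPrimitiveRoot_mem {p n k : ℕ} [Fact p.Prime] {L : Type*} [Field L]
    [Finite L] [CharP L p] (hL : Nat.card L = p ^ n) (hk : IsPrimitiveDivisor p n k)
    {S : Subring L} {ζ : L} (hζ : IsPrimitiveRoot ζ k) (hζS : ζ ∈ S) : S = ⊤ := by
  classical
  have hk0 : k ≠ 0 := by
    rintro rfl
    have := Finite.one_lt_card (α := L)
    have := Nat.eq_zero_of_zero_dvd hk.1
    omega
  -- `S` is a finite domain, hence a field of order `p ^ a`; `ζ ∈ Sˣ` forces `k ∣ p ^ a - 1`.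
  have := Fintype.ofFinite S
  let : Field S := Fintype.fieldOfDomain S
  have : CharP S p := S.subtype.charP S.subtype_injective p
  obtain ⟨a, -, ha⟩ := FiniteField.card S p
  have hk_dvd : k ∣ p ^ (a : ℕ) - 1 := by
    refine hζ.dvd_of_pow_eq_one _ ?_
    have h := FiniteField.pow_card_sub_one_eq_one (⟨ζ, hζS⟩ : S)
      (fun h => hζ.ne_zero hk0 (congrArg Subtype.val h))
    rw [ha] at h
    exact congrArg Subtype.val h
  have hna : n ≤ a := by
    by_contra h
    exact hk.2 a a.pos (by omega) hk_dvd
  have hcard : Nat.card S.toAddSubgroup = Nat.card L := by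
    refine le_antisymm (Nat.card_le_card_of_injective _ Subtype.val_injective) ?_
    rw [hL]
    change p ^ n ≤ Nat.card S
    rw [Nat.card_eq_fintype_card, ha]
    exact Nat.pow_le_pow_right (Fact.out : p.Prime).pos hna
  have htop := S.toAddSubgroup.eq_top_of_card_eq hcard
  exact (Subring.eq_top_iff' S).2 fun x => by
    simpa using (AddSubgroup.eq_top_iff' _).1 htop x

theorem Module.Basis.equivFun_eq_single_iff {ι R M : Type*} [Finite ι] [DecidableEq ι]
    [Semiring R] [AddCommMonoid M] [Module R M] (B : Basis ι R M) {x : M} {i : ι} {a : R} :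
    B.equivFun x = Pi.single i a ↔ x = a • B i := by
  rw [← LinearEquiv.eq_symm_apply, ← Basis.equivFun_symm_single B, ← map_smul]
  congr!
  ext j
  simp [Pi.single_apply]

section PowerBasis

variable {F L : Type*} [Field F] [Field L] [Algebra F L] {b : ℕ} {s : L}

theorem exists_basis_pow_of_adjoin_eq_top [FiniteDimensional F L]
    (hs : Algebra.adjoin F {s} = ⊤) (hb : finrank F L = b) :
    ∃ B : Basis (Fin b) F L, ∀ i, B i = s ^ (i : ℕ) := by
  subst hb
  let pb := PowerBasis.ofAdjoinEqTop (IsIntegral.of_finite F s) hs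
  exact ⟨pb.basis.reindex (finCongr pb.finrank.symm), fun i => by
    rw [Basis.reindex_apply, pb.basis_eq_pow]; rfl⟩

theorem finrank_eq_of_natCard_eq_pow [Finite L] (h : Nat.card L = Nat.card F ^ b) :
    finrank F L = b :=
  have : Finite F := .of_injective _ (algebraMap F L).injective
  Nat.pow_right_injective Finite.one_lt_card ((natCard_eq_pow_finrank (K := F)).symm.trans h)

theorem exists_isPrimitiveRoot_basis_pow [Finite L] {p n k : ℕ} [Fact p.Prime] [CharP L p]
    (hL : Nat.card L = p ^ n) (hk : IsPrimitiveDivisor p n k) (hb : finrank F L = b) :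
    ∃ s : L, IsPrimitiveRoot s k ∧ ∃ B : Basis (Fin b) F L, ∀ i, B i = s ^ (i : ℕ) := by
  obtain ⟨s, hs⟩ := FiniteField.exists_isPrimitiveRoot_of_dvd (hL ▸ hk.1)
  have hgen : Algebra.adjoin F {s} = ⊤ := Subalgebra.toSubring_injective <| by
    simpa using Subring.eq_top_of_isPrimitiveRoot_mem hL hk hs
      (S := (Algebra.adjoin F {s}).toSubring) (Algebra.subset_adjoin (Set.mem_singleton s))
  exact ⟨s, hs, exists_basis_pow_of_adjoin_eq_top hgen hb⟩

variable (B : Basis (Fin b) F L) (hB : ∀ i, B i = s ^ (i : ℕ))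
include hB

theorem pow_notMem_range_algebraMap_of_basis_pow {j : ℕ} (hj0 : 0 < j) (hjb : j < b) :
    s ^ j ∉ Set.range (algebraMap F L) := by
  rintro ⟨a, ha⟩
  have h := congrArg (fun x => B.repr x ⟨j, hjb⟩) ha
  simp only [Algebra.algebraMap_eq_smul_one, ← pow_zero s, ← hB ⟨0, hj0.trans hjb⟩,
    ← hB ⟨j, hjb⟩] at h
  simp [Basis.repr_self, Fin.ext_iff, hj0.ne] at h

theorem even_of_basis_pow [Finite F] {c : ℕ} (hs : s ^ (b * c) = 1) (hc : c ∣ Nat.card F - 1)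
    (hF : Odd (Nat.card F)) (hbc : Even (b * c)) : Even c := by
  by_contra hodd
  rw [Nat.not_even_iff_odd] at hodd
  obtain ⟨b', rfl⟩ : Even b := (Nat.even_mul.1 hbc).resolve_right (Nat.not_even_iff_odd.2 hodd)
  have hb' : 0 < b' := by
    have := Fin.pos_iff_nonempty.2 B.index_nonempty
    omega
  have h2c : 2 * c ∣ Nat.card F - 1 := by
    refine Nat.Coprime.mul_dvd_of_dvd_of_dvd (Nat.coprime_two_left.2 hodd) ?_ hc
    have := Nat.odd_iff.1 hF
    omega
  refine pow_notMem_range_algebraMap_of_basis_pow B hB hb' (by omega)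
    (FiniteField.mem_range_algebraMap_of_pow_eq_one h2c ?_)
  rw [← hs, ← pow_mul]
  ring_nf

theorem pow_eq_one_iff_equivFun_eq_single [Finite F] {c : ℕ} (hs : IsPrimitiveRoot s (b * c))
    (hc : c ∣ Nat.card F - 1) (x : L) :
    x ^ (b * c) = 1 ↔ ∃ i, ∃ a : F, a ^ c = 1 ∧ B.equivFun x = Pi.single i a := by
  simp only [B.equivFun_eq_single_iff]
  have hb0 : 0 < b := Fin.pos_iff_nonempty.2 B.index_nonempty
  have hc0 : c ≠ 0 := ne_zero_of_dvd_ne_zero FiniteField.card_sub_one_ne_zero hc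
  obtain ⟨t, ht⟩ := FiniteField.mem_range_algebraMap_of_pow_eq_one hc (x := s ^ b)
    (by rw [← pow_mul, hs.pow_eq_one])
  have htc : t ^ c = 1 := (algebraMap F L).injective (by
    rw [map_pow, ht, ← pow_mul, hs.pow_eq_one, map_one])
  constructor
  · intro hx
    have : NeZero (b * c) := ⟨Nat.mul_ne_zero hb0.ne' hc0⟩
    obtain ⟨j, -, rfl⟩ := hs.eq_pow_of_pow_eq_one hx
    refine ⟨⟨j % b, Nat.mod_lt _ hb0⟩, t ^ (j / b),
      by rw [← pow_mul, mul_comm, pow_mul, htc, one_pow], ?_⟩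
    rw [hB, Algebra.smul_def, map_pow, ht, ← pow_mul, ← pow_add, Nat.div_add_mod]
  · rintro ⟨i, a, ha, rfl⟩
    have hsi : (s ^ (i : ℕ)) ^ (b * c) = 1 := by
      rw [← pow_mul, mul_comm, pow_mul, hs.pow_eq_one, one_pow]
    have ha' : a ^ (b * c) = 1 := by rw [mul_comm, pow_mul, ha, one_pow]
    rw [hB, smul_pow, hsi, ha', one_smul]

end PowerBasis

theorem FiniteField.closure_setOf_pow_eq_one_eq_top {p m c : ℕ} [Fact p.Prime] {K : Type*}
    [Field K] [Finite K] [CharP K p] (hK : Nat.card K = p ^ m) (hc : IsPrimitiveDivisor p m c) :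
    AddSubgroup.closure {x : K | x ^ c = 1} = ⊤ := by
  obtain ⟨ζ, hζ⟩ := exists_isPrimitiveRoot_of_dvd (hK ▸ hc.1)
  have htop := Subring.eq_top_of_isPrimitiveRoot_mem hK hc hζ
    (Subring.subset_closure (Set.mem_singleton ζ))
  refine eq_top_iff.2 fun x _ => ?_
  have hx : x ∈ Subring.closure {ζ} := htop ▸ Subring.mem_top x
  rw [Subring.mem_closure_iff] at hx
  refine AddSubgroup.closure_mono ?_ hx
  rintro _ hy
  obtain ⟨j, rfl⟩ := Submonoid.mem_closure_singleton.1 hy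
  show (ζ ^ j) ^ c = 1
  rw [← pow_mul, mul_comm, pow_mul, hζ.pow_eq_one, one_pow]

namespace SimpleGraph

variable {V W : Type*} [AddGroup V] [AddGroup W] {G : SimpleGraph V} {H : SimpleGraph W}
  {P : V → Prop} {Q : W → Prop}

theorem connected_of_adj_iff_sub (hG : ∀ x y, G.Adj x y ↔ x ≠ y ∧ P (x - y))
    (hP : AddSubgroup.closure {v | P v} = ⊤) : G.Connected := by
  have hreach : ∀ z x, G.Reachable x (z + x) := fun z => by
    refine AddSubgroup.closure_induction (p := fun z _ => ∀ x, G.Reachable x (z + x))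
      ?_ ?_ ?_ ?_ (hP ▸ AddSubgroup.mem_top z)
    · intro t ht x
      by_cases h0 : t = 0
      · simp [h0]
      · exact ((hG _ _).2 ⟨by simpa using h0, by simpa using ht⟩).reachable.symm
    · simp
    · intro z₁ z₂ _ _ h₁ h₂ x
      simpa [add_assoc] using (h₂ x).trans (h₁ (z₂ + x))
    · intro z _ h x
      simpa using (h (-z + x)).symm
  exact (connected_iff G).2 ⟨fun x y => by simpa using hreach (y - x) x, inferInstance⟩

def Iso.ofAddEquivOfAdjIff (φ : V ≃+ W) (hG : ∀ x y, G.Adj x y ↔ x ≠ y ∧ P (x - y))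
    (hH : ∀ x y, H.Adj x y ↔ x ≠ y ∧ Q (x - y)) (hPQ : ∀ v, Q (φ v) ↔ P v) :
    G ≃g H where
  toEquiv := φ.toEquiv
  map_rel_iff' {x y} := by simp [hG, hH, ← map_sub, hPQ]

end SimpleGraph

theorem boxPow_adj_iff_sub {V : Type*} [AddGroup V] {G : SimpleGraph V}
    {P : V → Prop} {b : ℕ} (hG : ∀ x y, G.Adj x y ↔ x ≠ y ∧ P (x - y)) (hP : ¬ P 0)
    (X Y : Fin b → V) :
    (boxPow b G).Adj X Y ↔ X ≠ Y ∧ ∃ i a, P a ∧ X - Y = Pi.single i a := by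
  simp only [boxPow, hG]
  constructor
  · rintro ⟨i, ⟨hne, hi⟩, hrest⟩
    refine ⟨fun h => hne (congrFun h i), i, _, hi, funext fun j => ?_⟩
    by_cases hj : j = i
    · subst hj; simp
    · simp [hj, hrest j hj]
  · rintro ⟨-, i, a, ha, hXY⟩
    have hcoord (j : Fin b) : X j - Y j = (Pi.single i a : Fin b → V) j := by
      rw [← Pi.sub_apply, hXY]
    have hi : X i - Y i = a := by simpa using hcoord i
    refine ⟨i, ⟨fun h => hP ?_, hi ▸ ha⟩,
      fun j hj => sub_eq_zero.1 (by simpa [hj] using hcoord j)⟩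
    rwa [← hi, h, sub_self] at ha

theorem neg_one_pow_eq_one_of_charP {K : Type*} [Ring K] {p k : ℕ} [Fact p.Prime] [CharP K p]
    (h : Odd p → Even k) : (-1 : K) ^ k = 1 := by
  rcases (Fact.out : p.Prime).eq_two_or_odd' with rfl | hp
  · rw [CharTwo.neg_eq, one_pow]
  · exact (h hp).neg_one_pow

theorem gpaley_adj_iff {p : ℕ} [Fact p.Prime] {n k : ℕ} (hn : n ≠ 0) (hk : k ∣ p ^ n - 1)
    (hneg : (-1 : GaloisField p n) ^ k = 1) (x y : GaloisField p n) :
    (gpaley p n k).Adj x y ↔ x ≠ y ∧ (x - y) ^ k = 1 := by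
  have hcard := GaloisField.card p n hn
  have hpow := FiniteField.exists_pow_card_sub_one_div_eq_iff (hcard ▸ hk)
  rw [gpaley, SimpleGraph.fromRel_adj, ← hcard, hpow, hpow, ← neg_sub, neg_eq_neg_one_mul,
    mul_pow, hneg, one_mul, or_self]

noncomputable abbrev GaloisField.algebraOfDvd (p : ℕ) [Fact p.Prime] {m n : ℕ} (hm : m ≠ 0)
    (hn : n ≠ 0) (hmn : m ∣ n) : Algebra (GaloisField p m) (GaloisField p n) :=
  (FiniteField.nonempty_algHom_of_finrank_dvd (F := ZMod p)
    (by rwa [GaloisField.finrank p hm, GaloisField.finrank p hn])).some.toAlgebra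

theorem gpaley_iso_boxPow_general (p n k b c : ℕ) [Fact p.Prime] (hn : 0 < n)
    (hk : IsPrimitiveDivisor p n k) (heven : Odd p → Even k)
    (hkbc : k = b * c) (hbn : b ∣ n)
    (hc : IsPrimitiveDivisor p (n / b) c) :
    (Odd p → Even c) ∧ (gpaley p (n / b) c).Connected ∧
      Nonempty (gpaley p n k ≃g boxPow b (gpaley p (n / b) c)) := by
  subst hkbc
  obtain ⟨m, rfl⟩ := hbn
  have hb : 0 < b := Nat.pos_of_mul_pos_right hn
  have hm : m ≠ 0 := (Nat.pos_of_mul_pos_left hn).ne'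
  rw [Nat.mul_div_cancel_left m hb] at hc ⊢
  let _ := GaloisField.algebraOfDvd p hm hn.ne' (dvd_mul_left m b)
  have hF := GaloisField.card p m hm
  have hL := GaloisField.card p _ hn.ne'
  obtain ⟨s, hs, B, hB⟩ := exists_isPrimitiveRoot_basis_pow hL hk
    (finrank_eq_of_natCard_eq_pow (F := GaloisField p m) (by rw [hL, hF, ← pow_mul, mul_comm]))
  have hcF : c ∣ Nat.card (GaloisField p m) - 1 := hF ▸ hc.1
  have heven_c : Odd p → Even c := fun hp =>
    even_of_basis_pow B hB hs.pow_eq_one hcF (hF ▸ hp.pow) (heven hp)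
  have hadj := gpaley_adj_iff hm hc.1 (neg_one_pow_eq_one_of_charP heven_c)
  have hc0 : c ≠ 0 := ne_zero_of_dvd_ne_zero FiniteField.card_sub_one_ne_zero hcF
  refine ⟨heven_c, SimpleGraph.connected_of_adj_iff_sub hadj
    (FiniteField.closure_setOf_pow_eq_one_eq_top hF hc), ⟨?_⟩⟩
  exact SimpleGraph.Iso.ofAddEquivOfAdjIff B.equivFun.toAddEquiv
    (P := fun x => x ^ (b * c) = 1) (Q := fun w => ∃ i a, a ^ c = 1 ∧ w = Pi.single i a)
    (gpaley_adj_iff hn.ne' hk.1 (neg_one_pow_eq_one_of_charP heven))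
    (boxPow_adj_iff_sub hadj (by simp [hc0]))
    (fun x => (pow_eq_one_iff_equivFun_eq_single B hB hs hcF x).symm)

/-- If `k` is a primitive divisor of `p^n - 1` (even if `p` is odd)
and `k = b * c` with `b > 1`, `b ∣ n`, `c` a primitive divisor of `p^(n/b) - 1`,
then `c` is even if `p` is odd, `GPaley(p^(n/b), c)` is connected, and
`GPaley(p^n, k)` is isomorphic to the `b`-fold Cartesian power of
`GPaley(p^(n/b), c)`. -/
theorem gpaley_iso_boxPow (p n k b c : ℕ) [Fact p.Prime] (hn : 0 < n)
    (hk : IsPrimitiveDivisor p n k) (heven : Odd p → Even k)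
    (hkbc : k = b * c) (hb : 1 < b) (hbn : b ∣ n)
    (hc : IsPrimitiveDivisor p (n / b) c) :
    (Odd p → Even c) ∧ (gpaley p (n / b) c).Connected ∧
      Nonempty (gpaley p n k ≃g boxPow b (gpaley p (n / b) c)) :=
  gpaley_iso_boxPow_general p n k b c hn hk heven hkbc hbn hc
end

section
/- Let b > 1 and let Δ be the Cartesian product Γ₁ □ Γ₂ □ … □ Γ_b of finite simple graphs Γ₁, …, Γ_b, each of which is Cartesian-prime. If Δ is connected and the automorphism group of Δ acts transitively on the arcs of Δ (ordered pairs of adjacent vertices), then the factors Γ₁, …, Γ_b are pairwise isomorphic. -/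
/-- The Cartesian (box) product of a family of simple graphs: vertices are
tuples, two tuples being adjacent iff they agree in all but one coordinate
and are adjacent in that coordinate. -/
def boxProdPi {ι : Type*} {V : ι → Type*} (G : ∀ i, SimpleGraph (V i)) :
    SimpleGraph (∀ i, V i) where
  Adj x y := ∃ i, (G i).Adj (x i) (y i) ∧ ∀ j, j ≠ i → x j = y j
  symm := by
    constructor
    rintro x y ⟨i, hadj, h⟩
    exact ⟨i, hadj.symm, fun j hj => (h j hj).symm⟩
  loopless := by
    constructor
    rintro x ⟨i, hadj, -⟩
    exact (G i).loopless.irrefl _ hadj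

/-- A graph is Cartesian decomposable if it is isomorphic to a Cartesian
product of two graphs, each having at least two vertices. -/
def CartesianDecomposable {V : Type*} (G : SimpleGraph V) : Prop :=
  ∃ (V₁ V₂ : Type) (Γ₁ : SimpleGraph V₁) (Γ₂ : SimpleGraph V₂),
    Nontrivial V₁ ∧ Nontrivial V₂ ∧ Nonempty (G ≃g Γ₁ □ Γ₂)

/-- A graph with at least two vertices is Cartesian-prime if it is not
Cartesian decomposable. -/
def CartesianPrime {V : Type*} (G : SimpleGraph V) : Prop :=
  Nontrivial V ∧ ¬ CartesianDecomposable G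

/-!
The distance in `Δ = Γ₁ □ … □ Γ_b` is the sum of the distances in the factors, and automorphisms
are isometries. Hence an automorphism `f` maps a `Γ_i`-layer, which is convex, onto a convex set,
and a convex set of `Δ` is the product of its projections, since exchanging coordinates between
two of its points yields a vertex on a geodesic between them. As `Γ_i` is Cartesian-prime, only
one projection is nontrivial; if `f` maps an edge in direction `i` to one in direction `j`, this
is the `j`-th one, so `Γ_i` is an induced subgraph of `Γ_j`. Arc-transitivity provides such an
`f` for all `i, j`, and for finite graphs mutual embeddings as induced subgraphs give an
isomorphism.
-/

open Function

namespace SimpleGraph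

section Maps

variable {V W : Type*} {G : SimpleGraph V} {G' : SimpleGraph W}

lemma Hom.edist_le (f : G →g G') (u v : V) : G'.edist (f u) (f v) ≤ G.edist u v := by
  by_cases h : G.edist u v = ⊤
  · simp [h]
  obtain ⟨p, hp⟩ := exists_walk_of_edist_ne_top h
  rw [← hp, ← p.length_map f]
  exact SimpleGraph.edist_le _

lemma Iso.edist_eq (f : G ≃g G') (u v : V) : G'.edist (f u) (f v) = G.edist u v :=
  le_antisymm (f.toHom.edist_le u v) <| by
    simpa using f.symm.toHom.edist_le (f u) (f v)

lemma Iso.dist_eq (f : G ≃g G') (u v : V) : G'.dist (f u) (f v) = G.dist u v := by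
  rw [dist, dist, f.edist_eq]

lemma card_le_of_iso_induce [Finite W] {C : Set W} (e : G ≃g G'.induce C) :
    Nat.card V ≤ Nat.card W :=
  (Nat.card_congr e.toEquiv).trans_le (Finite.card_subtype_le _)

lemma nonempty_iso_of_iso_induce [Finite W] {C : Set W} (e : G ≃g G'.induce C)
    (hcard : Nat.card W ≤ Nat.card V) : Nonempty (G ≃g G') := by
  obtain rfl : C = Set.univ := Set.eq_of_subset_of_ncard_le (Set.subset_univ C)
    (by rwa [Set.ncard_univ, ← Nat.card_coe_set_eq, ← Nat.card_congr e.toEquiv]) Set.finite_univ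
  exact ⟨e.trans G'.induceUnivIso⟩

end Maps

section Convex

variable {V W : Type*} {G : SimpleGraph V} {G' : SimpleGraph W}

/-- Geodesic convexity. `dist` is `0` between unreachable vertices, so this is only meaningful for
connected graphs. -/
def IsConvex (G : SimpleGraph V) (S : Set V) : Prop :=
  ∀ ⦃u v w⦄, u ∈ S → w ∈ S → G.dist u v + G.dist v w = G.dist u w → v ∈ S

lemma isConvex_univ : G.IsConvex Set.univ := fun _ _ _ _ _ _ => trivial

lemma Connected.isConvex_singleton (hG : G.Connected) (a : V) : G.IsConvex {a} := by
  rintro u v w rfl rfl h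
  rw [dist_self] at h
  exact (hG.dist_eq_zero_iff.1 (by omega)).symm

lemma IsConvex.image_iso {S : Set V} (hS : G.IsConvex S) (f : G ≃g G') :
    G'.IsConvex (f '' S) := by
  rintro _ v _ ⟨u, hu, rfl⟩ ⟨w, hw, rfl⟩ h
  refine ⟨f.symm v, hS hu hw ?_, f.apply_symm_apply v⟩
  rwa [← f.dist_eq u, ← f.dist_eq _ w, ← f.dist_eq, f.apply_symm_apply]

end Convex

section BoxProdPi

variable {ι : Type*} {V : ι → Type*} {G : ∀ i, SimpleGraph (V i)}

@[simp]
lemma boxProdPi_adj {x y : ∀ i, V i} :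
    (boxProdPi G).Adj x y ↔ ∃ i, (G i).Adj (x i) (y i) ∧ ∀ j, j ≠ i → x j = y j :=
  Iff.rfl

variable (G) in
def induceUnivPiIso (C : ∀ i, Set (V i)) :
    (boxProdPi G).induce (Set.univ.pi C) ≃g boxProdPi fun i => (G i).induce (C i) where
  toEquiv := Equiv.Set.univPi C
  map_rel_iff' := by simp [Subtype.ext_iff]

section DecidableEq

variable [DecidableEq ι]

/-- The embedding of `G i` onto the `G i`-layer through `x`. -/
def boxProdPiUpdate (x : ∀ i, V i) (i : ι) : G i ↪g boxProdPi G where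
  toFun := update x i
  inj' := update_injective x i
  map_rel_iff' {a c} := by
    refine ⟨fun ⟨k, hk, _⟩ => ?_, fun h => ⟨i, by simpa using h, fun k hk => by simp [hk]⟩⟩
    rcases eq_or_ne k i with rfl | hki
    · simpa using hk
    · simp [hki] at hk

@[simp]
lemma coe_boxProdPiUpdate (x : ∀ i, V i) (i : ι) :
    ⇑(boxProdPiUpdate (G := G) x i) = update x i :=
  rfl

noncomputable def isoBoxProdPiOfSubsingleton (x : ∀ i, V i) (j : ι)
    (h : ∀ k, k ≠ j → Subsingleton (V k)) : G j ≃g boxProdPi G where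
  toEquiv := Equiv.ofBijective (update x j) ⟨update_injective x j, fun z => ⟨z j, funext fun k => by
    rcases eq_or_ne k j with rfl | hkj
    · simp
    · exact (h k hkj).elim _ _⟩⟩
  map_rel_iff' := (boxProdPiUpdate x j).map_adj_iff

variable (G) in
def boxProdPiSplitIso (k : ι) : boxProdPi G ≃g G k □ boxProdPi fun i : {i // i ≠ k} => G i where
  toEquiv := Equiv.piSplitAt k V
  map_rel_iff' {x y} := by
    simp only [Equiv.piSplitAt_apply, boxProd_adj, boxProdPi_adj, Subtype.forall, ne_eq,
      Subtype.exists, Subtype.mk.injEq, funext_iff]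
    constructor
    · rintro (⟨h, hx⟩ | ⟨⟨i, hik, h, hx⟩, hk⟩)
      · exact ⟨k, h, hx⟩
      · refine ⟨i, h, fun j hji => ?_⟩
        rcases eq_or_ne j k with rfl | hjk
        · exact hk
        · exact hx j hjk hji
    · rintro ⟨i, h, hx⟩
      rcases eq_or_ne i k with rfl | hik
      · exact Or.inl ⟨h, hx⟩
      · exact Or.inr ⟨⟨i, hik, h, fun j _ hji => hx j hji⟩, hx k hik.symm⟩

lemma edist_boxProdPi_le_sum {s : Finset ι} {x y : ∀ i, V i} (h : ∀ i, i ∉ s → x i = y i) :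
    (boxProdPi G).edist x y ≤ ∑ i ∈ s, (G i).edist (x i) (y i) := by
  induction s using Finset.induction_on generalizing x with
  | empty =>
    obtain rfl : x = y := funext fun i => h i (Finset.notMem_empty i)
    simp
  | @insert a s ha ih =>
    have hstep : (boxProdPi G).edist x (update x a (y a)) ≤ (G a).edist (x a) (y a) := by
      simpa using (boxProdPiUpdate (G := G) x a).toHom.edist_le (x a) (y a)
    have hrest : (boxProdPi G).edist (update x a (y a)) y ≤
        ∑ i ∈ s, (G i).edist (x i) (y i) := by
      refine (ih fun i hi => ?_).trans_eq (Finset.sum_congr rfl fun i hi => ?_)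
      · rcases eq_or_ne i a with rfl | hia
        · simp
        · simp [hia, h i (by simp [hia, hi])]
      · rw [update_of_ne (ne_of_mem_of_not_mem hi ha)]
    calc (boxProdPi G).edist x y
        ≤ (boxProdPi G).edist x (update x a (y a)) + (boxProdPi G).edist (update x a (y a)) y :=
          (boxProdPi G).edist_triangle
      _ ≤ ∑ i ∈ insert a s, (G i).edist (x i) (y i) := by
          rw [Finset.sum_insert ha]
          exact add_le_add hstep hrest

end DecidableEq

variable [Fintype ι]

lemma sum_edist_le_length {x y : ∀ i, V i} (p : (boxProdPi G).Walk x y) :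
    ∑ i, (G i).edist (x i) (y i) ≤ p.length := by
  induction p with
  | nil => simp
  | @cons x m y hadj p ih =>
    obtain ⟨k, hk, hne⟩ := id hadj
    calc ∑ i, (G i).edist (x i) (y i)
        ≤ ∑ i, ((G i).edist (x i) (m i) + (G i).edist (m i) (y i)) :=
          Finset.sum_le_sum fun i _ => (G i).edist_triangle
      _ = (G k).edist (x k) (m k) + ∑ i, (G i).edist (m i) (y i) := by
          rw [Finset.sum_add_distrib, Finset.sum_eq_single k
            (fun i _ hi => by rw [hne i hi, edist_self]) (by simp)]
      _ ≤ 1 + p.length := add_le_add (edist_eq_one_iff_adj.2 hk).le ih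
      _ = (Walk.cons hadj p).length := by simp [add_comm]

lemma edist_boxProdPi (x y : ∀ i, V i) :
    (boxProdPi G).edist x y = ∑ i, (G i).edist (x i) (y i) := by
  classical
  refine le_antisymm (edist_boxProdPi_le_sum fun i hi => (hi (Finset.mem_univ i)).elim) ?_
  by_cases h : (boxProdPi G).edist x y = ⊤
  · simp [h]
  obtain ⟨p, hp⟩ := exists_walk_of_edist_ne_top h
  exact hp ▸ sum_edist_le_length p

lemma reachable_boxProdPi {x y : ∀ i, V i} :
    (boxProdPi G).Reachable x y ↔ ∀ i, (G i).Reachable (x i) (y i) := by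
  simp [← edist_ne_top_iff_reachable, edist_boxProdPi]

lemma Connected.ofBoxProdPi (h : (boxProdPi G).Connected) (i : ι) : (G i).Connected := by
  classical
  obtain ⟨z⟩ := h.nonempty
  have : Nonempty (V i) := ⟨z i⟩
  exact ⟨fun a c => by
    simpa using reachable_boxProdPi.1 (h.preconnected (update z i a) (update z i c)) i⟩

lemma dist_boxProdPi (hG : ∀ i, (G i).Connected) (x y : ∀ i, V i) :
    (boxProdPi G).dist x y = ∑ i, (G i).dist (x i) (y i) := by
  have hxy : (boxProdPi G).Reachable x y := reachable_boxProdPi.2 fun i => (hG i).preconnected _ _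
  apply Nat.cast_injective (R := ℕ∞)
  rw [Nat.cast_sum, hxy.coe_dist_eq_edist, edist_boxProdPi]
  exact Finset.sum_congr rfl fun i _ => ((hG i).preconnected _ _).coe_dist_eq_edist.symm

lemma IsConvex.univ_pi (hG : ∀ i, (G i).Connected) {C : ∀ i, Set (V i)}
    (hC : ∀ i, (G i).IsConvex (C i)) : (boxProdPi G).IsConvex (Set.univ.pi C) := by
  intro u v w hu hw h i _
  rw [dist_boxProdPi hG, dist_boxProdPi hG, dist_boxProdPi hG, ← Finset.sum_add_distrib] at h
  exact hC i (hu i trivial) (hw i trivial) <|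
    ((Finset.sum_eq_sum_iff_of_le fun i _ => (hG i).dist_triangle).1 h.symm i
      (Finset.mem_univ i)).symm

lemma dist_add_dist_of_forall_eq_or_eq (hG : ∀ i, (G i).Connected) {u v w : ∀ i, V i}
    (h : ∀ i, v i = u i ∨ v i = w i) :
    (boxProdPi G).dist u v + (boxProdPi G).dist v w = (boxProdPi G).dist u w := by
  rw [dist_boxProdPi hG, dist_boxProdPi hG, dist_boxProdPi hG, ← Finset.sum_add_distrib]
  refine Finset.sum_congr rfl fun i _ => ?_
  rcases h i with h | h <;> simp [h]

lemma IsConvex.eq_univ_pi_image (hG : ∀ i, (G i).Connected) {S : Set (∀ i, V i)}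
    (hS : (boxProdPi G).IsConvex S) (hne : S.Nonempty) :
    S = Set.univ.pi fun i => eval i '' S := by
  classical
  refine (Set.subset_pi_eval_image _ S).antisymm fun z hz => ?_
  suffices ∀ s : Finset ι, ∃ t ∈ S, ∀ i ∈ s, t i = z i by
    obtain ⟨t, ht, htz⟩ := this Finset.univ
    rwa [← funext fun i => htz i (Finset.mem_univ i)]
  intro s
  induction s using Finset.induction_on with
  | empty => exact hne.imp fun t ht => ⟨ht, by simp⟩
  | @insert a s ha ih =>
    obtain ⟨t, ht, htz⟩ := ih
    obtain ⟨u, hu, hua⟩ := hz a trivial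
    refine ⟨update t a (u a), hS ht hu (dist_add_dist_of_forall_eq_or_eq hG fun i => ?_), ?_⟩
    · rcases eq_or_ne i a with rfl | hia <;> simp [*]
    · intro i hi
      rcases eq_or_ne i a with rfl | hia
      · simpa using hua
      · simpa [hia] using htz i (Finset.mem_of_mem_insert_of_ne hi hia)

lemma isConvex_range_boxProdPiUpdate [DecidableEq ι] (hG : ∀ i, (G i).Connected)
    (x : ∀ i, V i) (i : ι) :
    (boxProdPi G).IsConvex (Set.range (boxProdPiUpdate (G := G) x i)) := by
  rw [coe_boxProdPiUpdate, ← Set.image_univ, Set.update_image]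
  refine IsConvex.univ_pi hG fun k => ?_
  rcases eq_or_ne k i with rfl | hki
  · simpa using isConvex_univ
  · simpa [hki] using (hG k).isConvex_singleton (x k)

end BoxProdPi

end SimpleGraph

open SimpleGraph

lemma CartesianPrime.subsingleton_of_iso_boxProdPi {U : Type*} {Γ : SimpleGraph U}
    (hΓ : CartesianPrime Γ) {ι : Type} [DecidableEq ι] {W : ι → Type} [∀ i, Nonempty (W i)]
    {H : ∀ i, SimpleGraph (W i)} (e : Γ ≃g boxProdPi H) {j k : ι} [Nontrivial (W j)]
    (hkj : k ≠ j) : Subsingleton (W k) := by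
  by_contra hk
  rw [not_subsingleton_iff_nontrivial] at hk
  have : Nontrivial (∀ i : {i // i ≠ k}, W i) := Pi.nontrivial_at ⟨j, hkj.symm⟩
  exact hΓ.2 ⟨_, _, _, _, hk, this, ⟨e.trans (boxProdPiSplitIso H k)⟩⟩

lemma CartesianPrime.exists_iso_induce_of_apply_ne {ι : Type} [Fintype ι] [DecidableEq ι]
    {V : ι → Type} {Γ : ∀ i, SimpleGraph (V i)} {i j : ι} (hprime : CartesianPrime (Γ i))
    (hΓ : ∀ i, (Γ i).Connected) (f : boxProdPi Γ ≃g boxProdPi Γ) (x : ∀ i, V i) {a c : V i}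
    (hj : f (update x i a) j ≠ f (update x i c) j) :
    ∃ C : Set (V j), Nonempty (Γ i ≃g (Γ j).induce C) := by
  set L := Set.range (boxProdPiUpdate (G := Γ) x i)
  set C : ∀ k, Set (V k) := fun k => eval k '' (f '' L)
  have hmem : ∀ a, ∀ k, f (update x i a) k ∈ C k := fun a k => ⟨_, ⟨_, ⟨a, rfl⟩, rfl⟩, rfl⟩
  have hbox : f '' L = Set.univ.pi C :=
    ((isConvex_range_boxProdPiUpdate hΓ x i).image_iso f).eq_univ_pi_image hΓ
      ⟨_, ⟨_, ⟨a, rfl⟩, rfl⟩⟩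
  have e : Γ i ≃g boxProdPi fun k => (Γ k).induce (C k) :=
    ((boxProdPiUpdate x i).isoInduceRange.trans
      (f.induce (hbox ▸ f.injective.injOn.bijOn_image))).trans (induceUnivPiIso Γ C)
  have : ∀ k, Nonempty (C k) := fun k => ⟨⟨_, hmem a k⟩⟩
  have : Nontrivial (C j) := ⟨⟨_, hmem a j⟩, ⟨_, hmem c j⟩, fun h => hj (congrArg Subtype.val h)⟩
  exact ⟨C j, ⟨e.trans (isoBoxProdPiOfSubsingleton (fun k => ⟨_, hmem a k⟩) j
    fun k hkj => hprime.subsingleton_of_iso_boxProdPi e hkj).symm⟩⟩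

theorem factors_pairwise_iso_of_arcTransitive_general (b : ℕ)
    (V : Fin b → Type) [∀ i, Fintype (V i)] (Γ : ∀ i, SimpleGraph (V i))
    (hprime : ∀ i, CartesianPrime (Γ i))
    (hconn : (boxProdPi Γ).Connected)
    (harc : ∀ x y x' y' : ∀ i, V i, (boxProdPi Γ).Adj x y → (boxProdPi Γ).Adj x' y' →
      ∃ f : boxProdPi Γ ≃g boxProdPi Γ, f x = x' ∧ f y = y') :
    ∀ i j, Nonempty (Γ i ≃g Γ j) := by
  have hΓ : ∀ i, (Γ i).Connected := hconn.ofBoxProdPi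
  obtain ⟨z⟩ := hconn.nonempty
  have hadj : ∀ i, ∃ a, (Γ i).Adj (z i) a := fun i =>
    have := (hprime i).1
    (hΓ i).preconnected.exists_adj_of_nontrivial (z i)
  have hembed : ∀ i j, ∃ C : Set (V j), Nonempty (Γ i ≃g (Γ j).induce C) := by
    intro i j
    obtain ⟨a, ha⟩ := hadj i
    obtain ⟨c, hc⟩ := hadj j
    obtain ⟨f, hfa, hfc⟩ := harc _ _ _ _ ((boxProdPiUpdate z i).map_adj_iff.2 ha)
      ((boxProdPiUpdate z j).map_adj_iff.2 hc)
    refine (hprime i).exists_iso_induce_of_apply_ne hΓ f z (a := z i) (c := a) ?_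
    simp only [coe_boxProdPiUpdate] at hfa hfc
    rw [hfa, hfc]
    simpa using hc.ne
  intro i j
  obtain ⟨C, ⟨e⟩⟩ := hembed i j
  obtain ⟨D, ⟨e'⟩⟩ := hembed j i
  exact nonempty_iso_of_iso_induce e (card_le_of_iso_induce e')

/-- If `Δ = Γ₁ □ … □ Γ_b` (with `b > 1`) is a Cartesian product of
finite Cartesian-prime simple graphs, `Δ` is connected, and the automorphism
group of `Δ` is transitive on arcs, then the factors are pairwise isomorphic. -/
theorem factors_pairwise_iso_of_arcTransitive (b : ℕ) (hb : 1 < b)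
    (V : Fin b → Type) [∀ i, Fintype (V i)] (Γ : ∀ i, SimpleGraph (V i))
    (hprime : ∀ i, CartesianPrime (Γ i))
    (hconn : (boxProdPi Γ).Connected)
    (harc : ∀ x y x' y' : ∀ i, V i, (boxProdPi Γ).Adj x y → (boxProdPi Γ).Adj x' y' →
      ∃ f : boxProdPi Γ ≃g boxProdPi Γ, f x = x' ∧ f y = y') :
    ∀ i j, Nonempty (Γ i ≃g Γ j) :=
  factors_pairwise_iso_of_arcTransitive_general b V Γ hprime hconn harc
end

section
/- Let p be a prime, n a positive integer, and k a primitive divisor of p^n − 1 such that k is even if p is odd. Suppose k = b·c with b > 1, b dividing n, and c a primitive divisor of p^{n/b} − 1, and write d = (p^n − 1)/k. Let ξ be a generator of the cyclic group GF(p^n)^*. Then the set {ξ^{d·1}, ξ^{d·2}, …, ξ^{d·b}} is a basis of GF(p^n) regarded as a vector space over its unique subfield of order p^{n/b}. -/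
open IntermediateField

theorem orderOf_dvd_natCard_sub_one {E : Type*} [Field E] [Finite E] {x : E} (hx : x ≠ 0) :
    orderOf x ∣ Nat.card E - 1 := by
  rw [← Nat.card_units, ← Units.val_mk0 hx, orderOf_units]
  exact orderOf_dvd_natCard _

theorem IntermediateField.orderOf_dvd_natCard_adjoin_simple_sub_one {K L : Type*} [Field K]
    [Field L] [Algebra K L] [Finite L] {x : L} (hx : x ≠ 0) :
    orderOf x ∣ Nat.card K⟮x⟯ - 1 := by
  let y : K⟮x⟯ := ⟨x, mem_adjoin_simple_self K x⟩
  have hy : y ≠ 0 := fun h => hx (congrArg Subtype.val h)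
  have hord : orderOf x = orderOf y :=
    orderOf_injective (algebraMap K⟮x⟯ L).toMonoidHom (algebraMap K⟮x⟯ L).injective y
  exact hord ▸ orderOf_dvd_natCard_sub_one hy

theorem natDegree_minpoly_eq_finrank_of_not_orderOf_dvd {K L : Type*} [Field K] [Field L]
    [Algebra K L] [Finite L] {x : L} (hx : x ≠ 0)
    (hprim : ∀ e, 1 ≤ e → e < Module.finrank K L → ¬ orderOf x ∣ Nat.card K ^ e - 1) :
    (minpoly K x).natDegree = Module.finrank K L := by
  have : Finite K := Finite.of_injective _ (algebraMap K L).injective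
  rw [← adjoin.finrank (.of_finite K x)]
  have hle : Module.finrank K K⟮x⟯ ≤ Module.finrank K L :=
    Submodule.finrank_le K⟮x⟯.toSubalgebra.toSubmodule
  refine hle.eq_or_lt.resolve_right fun hlt => hprim _ Module.finrank_pos hlt ?_
  rw [← Module.natCard_eq_pow_finrank]
  exact orderOf_dvd_natCard_adjoin_simple_sub_one hx

theorem linearIndependent_pow_succ {K L : Type*} [Field K] [Field L] [Algebra K L] {x : L}
    (hx : x ≠ 0) {b : ℕ} (hb : (minpoly K x).natDegree = b) :
    LinearIndependent K fun i : Fin b => x ^ (i.val + 1) := by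
  subst hb
  have hker : (LinearMap.mulLeft K x).ker = ⊥ :=
    LinearMap.ker_eq_bot.2 (mul_right_injective₀ hx)
  simpa [Function.comp_def, pow_succ'] using (linearIndependent_pow (K := K) x).map' _ hker

theorem finrank_eq_of_natCard_eq_pow_s10 {K L : Type*} [Field K] [Ring L] [Algebra K L]
    [Module.Finite K L] {p m b : ℕ} (hp : 2 ≤ p) (hm : 0 < m)
    (hK : Nat.card K = p ^ m) (hL : Nat.card L = p ^ (m * b)) :
    Module.finrank K L = b := by
  have h := Module.natCard_eq_pow_finrank (K := K) (V := L)
  rw [hL, hK, ← pow_mul] at h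
  exact (Nat.eq_of_mul_eq_mul_left hm (Nat.pow_right_injective hp h)).symm

theorem gpaley_power_basis_general (p n k b : ℕ) [Fact p.Prime] (hn : 0 < n)
    (hk : IsPrimitiveDivisor p n k) (hbn : b ∣ n)
    (ξ : (GaloisField p n)ˣ) (hξ : Subgroup.zpowers ξ = ⊤)
    (K : Subfield (GaloisField p n)) (hK : Nat.card K = p ^ (n / b)) :
    LinearIndependent K
        (fun i : Fin b => (ξ : GaloisField p n) ^ ((p ^ n - 1) / k * (i.val + 1))) ∧
      Submodule.span K
          (Set.range fun i : Fin b =>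
            (ξ : GaloisField p n) ^ ((p ^ n - 1) / k * (i.val + 1))) = ⊤ := by
  have hp : 2 ≤ p := (Fact.out : p.Prime).two_le
  have hb : 0 < b := Nat.pos_of_dvd_of_pos hbn hn
  have hm : 0 < n / b := Nat.div_pos (Nat.le_of_dvd hn hbn) hb
  have hmb : n / b * b = n := Nat.div_mul_cancel hbn
  have hcard : Nat.card (GaloisField p n) = p ^ n := GaloisField.card p n hn.ne'
  have hrank : Module.finrank K (GaloisField p n) = b :=
    finrank_eq_of_natCard_eq_pow_s10 hp hm hK (by rw [hmb, hcard])
  have hN : p ^ n - 1 ≠ 0 := Nat.sub_ne_zero_of_lt (Nat.one_lt_pow hn.ne' hp)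
  have hordξ : orderOf ξ = p ^ n - 1 := by
    rw [orderOf_eq_card_of_forall_mem_zpowers (fun y => hξ ▸ trivial), Nat.card_units, hcard]
  set η := ξ ^ ((p ^ n - 1) / k) with hη
  have hord : orderOf η = k := by
    rw [hη, ← hordξ]
    exact orderOf_pow_orderOf_div (hordξ ▸ hN) (hordξ ▸ hk.1)
  have hdeg : (minpoly K (η : GaloisField p n)).natDegree = b := by
    rw [← hrank]
    refine natDegree_minpoly_eq_finrank_of_not_orderOf_dvd η.ne_zero fun e he heb => ?_
    rw [hrank] at heb
    rw [orderOf_units, hord, hK, ← pow_mul]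
    exact hk.2 _ (Nat.mul_pos hm he) (hmb ▸ Nat.mul_lt_mul_of_pos_left heb hm :)
  have hlin := linearIndependent_pow_succ η.ne_zero hdeg
  simp only [hη, Units.val_pow_eq_pow_val, ← pow_mul] at hlin
  have : NeZero b := ⟨hb.ne'⟩
  exact ⟨hlin, hlin.span_eq_top_of_card_eq_finrank (by simp [hrank])⟩

/-- With `k = b * c` a primitive divisor of `p^n - 1` (even if `p`
is odd), `b > 1`, `b ∣ n`, `c` a primitive divisor of `p^(n/b) - 1`,
`d = (p^n - 1)/k`, and `ξ` a generator of `GF(p^n)ˣ`, the set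
`{ξ^(d·1), …, ξ^(d·b)}` is a basis of `GF(p^n)` as a vector space over its
unique subfield `K` of order `p^(n/b)`. -/
theorem gpaley_power_basis (p n k b c : ℕ) [Fact p.Prime] (hn : 0 < n)
    (hk : IsPrimitiveDivisor p n k) (heven : Odd p → Even k)
    (hkbc : k = b * c) (hb : 1 < b) (hbn : b ∣ n)
    (hc : IsPrimitiveDivisor p (n / b) c)
    (ξ : (GaloisField p n)ˣ) (hξ : Subgroup.zpowers ξ = ⊤)
    (K : Subfield (GaloisField p n)) (hK : Nat.card K = p ^ (n / b)) :
    LinearIndependent K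
        (fun i : Fin b => (ξ : GaloisField p n) ^ ((p ^ n - 1) / k * (i.val + 1))) ∧
      Submodule.span K
          (Set.range fun i : Fin b =>
            (ξ : GaloisField p n) ^ ((p ^ n - 1) / k * (i.val + 1))) = ⊤ :=
  gpaley_power_basis_general p n k b hn hk hbn ξ hξ K hK
end

section
/- Let p be a prime, n a positive integer, and k a primitive divisor of p^n − 1 such that k is even if p is odd. Suppose k = b·c with b > 1, b dividing n, and c a primitive divisor of p^{n/b} − 1, and write d = (p^n − 1)/k. Let ξ be a generator of GF(p^n)^* and let C = ⟨ξ^{(p^n−1)/c}⟩ be the subgroup of GF(p^n)^* of order c. Then for each j with 1 ≤ j ≤ b, the additive subgroup of GF(p^n) generated by the coset C·ξ^{d·j} equals the set { λ·ξ^{d·j} : λ ∈ K }, where K is the unique subfield of GF(p^n) of order p^{n/b}. -/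
/-!
Let `g = ξ ^ ((p ^ n - 1) / c)`, an element of order `c`. Since `c ∣ |K| - 1` and `Kˣ` is
cyclic, `K` already contains all `c`-th roots of unity, so `g ∈ K`. The additive span of the
powers of `g` is the subring `ℤ[g] ⊆ K`; it is a finite field of order `p ^ m` with `m ≤ n / b`,
and `c ∣ p ^ m - 1`, so primitivity of `c` forces `m = n / b`, i.e. `ℤ[g] = K`. Multiplication
by `ξ ^ (d * j)` is additive, so it carries this span onto the line `K * ξ ^ (d * j)`.
-/

theorem Subfield.mem_of_pow_eq_one {F : Type*} [Field F] (K : Subfield F) [Finite K] {c : ℕ}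
    (hc : c ∣ Nat.card K - 1) {x : F} (hx : x ^ c = 1) : x ∈ K := by
  have hK := Finite.one_lt_card (α := K)
  have : NeZero c := ⟨by rintro rfl; omega⟩
  obtain ⟨u, hu⟩ := IsCyclic.exists_ofOrder_eq_natCard (α := Kˣ)
  rw [Nat.card_units] at hu
  have hζ : IsPrimitiveRoot (u ^ (orderOf u / c)) c :=
    IsPrimitiveRoot.iff_orderOf.2 (orderOf_pow_orderOf_div (by omega) (hu ▸ hc))
  obtain ⟨i, -, hi⟩ := (hζ.map_of_injective (f := (K.subtype : K →* F).comp (Units.coeHom K))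
    (Subtype.val_injective.comp Units.val_injective)).eq_pow_of_pow_eq_one hx
  rw [← hi]
  exact pow_mem (SetLike.coe_mem _) i

theorem Subfield.natCard_sub_one_dvd {F : Type*} [Field F] (K : Subfield F) :
    Nat.card K - 1 ∣ Nat.card F - 1 := by
  rw [← Nat.card_units, ← Nat.card_units]
  exact Subgroup.card_dvd_of_injective _
    (Units.map_injective (f := (K.subtype : K →* F)) Subtype.val_injective)

theorem Subring.orderOf_dvd_natCard_sub_one {F : Type*} [Field F] (R : Subring F) [Finite R]
    {g : F} (hg : g ∈ R) (hg0 : g ≠ 0) : orderOf g ∣ Nat.card R - 1 := by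
  let _ : Field R := (Finite.isField_of_domain R).toField
  have hg0' : (⟨g, hg⟩ : R) ≠ 0 := fun h => hg0 (congrArg Subtype.val h)
  calc orderOf g = orderOf (Units.mk0 _ hg0') := by
        rw [← orderOf_units, Units.val_mk0]
        exact orderOf_injective (R.subtype : R →* F) Subtype.val_injective ⟨g, hg⟩
    _ ∣ Nat.card Rˣ := orderOf_dvd_natCard _
    _ = Nat.card R - 1 := Nat.card_units R

theorem Subring.closure_singleton_toAddSubgroup {R : Type*} [Ring R] (g : R) :
    (Subring.closure {g}).toAddSubgroup = AddSubgroup.closure (Set.range (g ^ · : ℕ → R)) := by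
  ext x
  rw [Subring.mem_toAddSubgroup, Subring.mem_closure_iff, ← Submonoid.powers_eq_closure,
    Submonoid.coe_powers]

theorem Subfield.toSubring_eq_closure_of_isPrimitiveDivisor {F : Type*} [Field F] {p t : ℕ}
    (hp : p.Prime) (K : Subfield F) (hK : Nat.card K = p ^ t) {g : F}
    (hg : IsPrimitiveDivisor p t (orderOf g)) : K.toSubring = Subring.closure {g} := by
  have : Finite K := Nat.finite_of_card_ne_zero (hK ▸ (pow_pos hp.pos t).ne')
  have hK1 := hK ▸ Finite.one_lt_card (α := K)
  have hg0 : g ≠ 0 := by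
    rintro rfl
    rw [IsPrimitiveDivisor, orderOf_zero, zero_dvd_iff] at hg
    omega
  have hgK : g ∈ K := K.mem_of_pow_eq_one (hK ▸ hg.1) (pow_orderOf_eq_one g)
  set R := Subring.closure {g}
  have hRK : R ≤ K.toSubring := Subring.closure_le.2 (Set.singleton_subset_iff.2 hgK)
  have : Finite R := Finite.Set.subset (K : Set F) hRK
  obtain ⟨m, hmt, hm⟩ := (Nat.dvd_prime_pow hp).1 <|
    hK ▸ AddSubgroup.card_dvd_of_le (Subring.toAddSubgroup_mono hRK)
  obtain rfl : m = t := by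
    refine hmt.antisymm (not_lt.1 fun hlt => hg.2 m ?_ hlt ?_)
    · exact Nat.pos_of_ne_zero fun h0 => (Finite.one_lt_card (α := R)).ne' (by simpa [h0] using hm)
    · exact hm ▸ R.orderOf_dvd_natCard_sub_one (Subring.subset_closure rfl) hg0
  exact Subring.toAddSubgroup_injective
    (AddSubgroup.eq_of_le_of_card_ge (Subring.toAddSubgroup_mono hRK) (hK.trans hm.symm).le).symm

theorem addClosure_coset_eq_subfield_line_general (p n k b c : ℕ) [Fact p.Prime]
    (hc : IsPrimitiveDivisor p (n / b) c)
    (ξ : (GaloisField p n)ˣ) (hξ : Subgroup.zpowers ξ = ⊤)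
    (K : Subfield (GaloisField p n)) (hK : Nat.card K = p ^ (n / b))
    (j : ℕ) :
    (AddSubgroup.closure
        ((fun x => x * (ξ : GaloisField p n) ^ ((p ^ n - 1) / k * j)) ''
          Set.range fun m : ℕ => (ξ : GaloisField p n) ^ ((p ^ n - 1) / c * m)) :
        Set (GaloisField p n)) =
      {y | ∃ l ∈ K, y = l * (ξ : GaloisField p n) ^ ((p ^ n - 1) / k * j)} := by
  have hn : n ≠ 0 := by
    rintro rfl
    simpa [hK] using Finite.one_lt_card (α := K)
  have hordξ : orderOf ξ = p ^ n - 1 := by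
    rw [orderOf_eq_card_of_forall_mem_zpowers (fun x => hξ ▸ Subgroup.mem_top x),
      Nat.card_units, GaloisField.card p n hn]
  have hcξ : c ∣ orderOf ξ := by
    refine hc.1.trans ?_
    rw [hordξ, ← hK, ← GaloisField.card p n hn]
    exact K.natCard_sub_one_dvd
  have hg : orderOf ((ξ : GaloisField p n) ^ ((p ^ n - 1) / c)) = c := by
    rw [← Units.val_pow_eq_pow_val, orderOf_units, ← hordξ,
      orderOf_pow_orderOf_div (orderOf_pos ξ).ne' hcξ]
  have hKg := K.toSubring_eq_closure_of_isPrimitiveDivisor Fact.out hK (hg ▸ hc)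
  simp_rw [pow_mul _ ((p ^ n - 1) / c)]
  rw [← AddMonoidHom.coe_mulRight, ← AddMonoidHom.map_closure, AddSubgroup.coe_map,
    ← Subring.closure_singleton_toAddSubgroup, ← hKg]
  ext y
  simp [eq_comm]

/-- With `k = b * c` a primitive divisor of `p^n - 1` (even if `p`
is odd), `b > 1`, `b ∣ n`, `c` a primitive divisor of `p^(n/b) - 1`,
`d = (p^n - 1)/k`, `ξ` a generator of `GF(p^n)ˣ`, and `C = ⟨ξ^((p^n-1)/c)⟩` the
subgroup of order `c`, for each `1 ≤ j ≤ b` the additive subgroup of `GF(p^n)`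
generated by the coset `C·ξ^(d·j)` equals `{λ·ξ^(d·j) : λ ∈ K}`, where `K` is
the unique subfield of order `p^(n/b)`. -/
theorem addClosure_coset_eq_subfield_line (p n k b c : ℕ) [Fact p.Prime]
    (hn : 0 < n) (hk : IsPrimitiveDivisor p n k) (heven : Odd p → Even k)
    (hkbc : k = b * c) (hb : 1 < b) (hbn : b ∣ n)
    (hc : IsPrimitiveDivisor p (n / b) c)
    (ξ : (GaloisField p n)ˣ) (hξ : Subgroup.zpowers ξ = ⊤)
    (K : Subfield (GaloisField p n)) (hK : Nat.card K = p ^ (n / b))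
    (j : ℕ) (hj1 : 1 ≤ j) (hjb : j ≤ b) :
    (AddSubgroup.closure
        ((fun x => x * (ξ : GaloisField p n) ^ ((p ^ n - 1) / k * j)) ''
          Set.range fun m : ℕ => (ξ : GaloisField p n) ^ ((p ^ n - 1) / c * m)) :
        Set (GaloisField p n)) =
      {y | ∃ l ∈ K, y = l * (ξ : GaloisField p n) ^ ((p ^ n - 1) / k * j)} :=
  addClosure_coset_eq_subfield_line_general p n k b c hc ξ hξ K hK j
end
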